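/- For any family of sets F, the Helly number h(F) is at most 1 plus the rational Leray number of the nerve N(F). -/

import Mathlib

open Classical in
/-- A (possibly abstract) simplicial complex: a set of finsets closed under taking subsets. -/
def IsComplex {V : Type*} (X : Set (Finset V)) : Prop := ∀ s ∈ X, ∀ t ⊆ s, t ∈ X

/-- Ordered `n`-tuples of vertices spanning a simplex of `X` (repetitions allowed). -/
def Tup {V : Type*} [DecidableEq V] (X : Set (Finset V)) (n : ℕ) : Type _ :=
  {σ : Fin n → V // Finset.image σ Finset.univ ∈ X}

/-- Rational ordered simplicial chains on tuples of `n` vertices. -/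
abbrev Chains {V : Type*} [DecidableEq V] (X : Set (Finset V)) (n : ℕ) := Tup X n →₀ ℚ

open Classical in
noncomputable def gen {V : Type*} [DecidableEq V] (X : Set (Finset V)) {n : ℕ}
    (τ : Fin n → V) : Chains X n :=
  if h : Finset.image τ Finset.univ ∈ X then Finsupp.single ⟨τ, h⟩ 1 else 0

/-- The simplicial boundary map. -/
noncomputable def bdry {V : Type*} [DecidableEq V] (X : Set (Finset V)) (n : ℕ) :
    Chains X (n + 1) →ₗ[ℚ] Chains X n :=
  Finsupp.lsum ℚ fun σ => LinearMap.toSpanSingleton ℚ (Chains X n)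
    (∑ i : Fin (n + 1), ((-1 : ℚ) ^ (i : ℕ)) • gen X (σ.1 ∘ i.succAbove))

/-- Reduced rational homology `H̃_i(X;ℚ)` (chains on `i+1` vertices correspond to
`i`-dimensional simplices; tuples with `0` vertices give the augmentation). -/
noncomputable abbrev reducedHomology {V : Type*} [DecidableEq V] (X : Set (Finset V)) (i : ℕ) :=
  LinearMap.ker (bdry X i) ⧸
    Submodule.comap (LinearMap.ker (bdry X i)).subtype (LinearMap.range (bdry X (i + 1)))

/-- `H̃_i(X;ℚ) = 0`. -/
def HomologyVanishes {V : Type*} [DecidableEq V] (X : Set (Finset V)) (i : ℕ) : Prop :=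
  ∀ x : reducedHomology X i, x = 0

/-- The induced subcomplex on a vertex subset. -/
def induced {V : Type*} (X : Set (Finset V)) (S : Finset V) : Set (Finset V) :=
  {s ∈ X | s ⊆ S}

/-- The rational Leray number `L(X)`. -/
noncomputable def lerayNumber {V : Type*} [DecidableEq V] (X : Set (Finset V)) : ℕ :=
  sInf {d | ∀ S : Finset V, ∀ i, d ≤ i → HomologyVanishes (induced X S) i}

/-- The nerve of an (indexed) family of sets. -/
def nerveCplx {ι : Type*} {α : Type*} (F : ι → Set α) : Set (Finset ι) :=
  {s : Finset ι | (⋂ i ∈ s, F i).Nonempty}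

/-- The Helly number of an indexed family of sets: the least positive `h` such that any finite
subfamily, all of whose subfamilies of cardinality `≤ h` have a common point, has a common
point. -/
noncomputable def hellyNumberIdx {ι : Type*} {α : Type*} (F : ι → Set α) : ℕ :=
  sInf {h | 0 < h ∧ ∀ K : Finset ι,
    (∀ K' ⊆ K, K'.card ≤ h → (⋂ i ∈ K', F i).Nonempty) → (⋂ i ∈ K, F i).Nonempty}


set_option linter.unusedSectionVars false

section Ambient
variable {ι : Type*} [DecidableEq ι]

/-- Ambient ordered chains. -/
abbrev Amb (ι : Type*) (n : ℕ) := (Fin n → ι) →₀ ℚ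

noncomputable def Dmap (ι : Type*) (n : ℕ) : Amb ι (n + 1) →ₗ[ℚ] Amb ι n :=
  Finsupp.lsum ℚ fun τ => LinearMap.toSpanSingleton ℚ (Amb ι n)
    (∑ i : Fin (n + 1), ((-1 : ℚ) ^ (i : ℕ)) • Finsupp.single (τ ∘ i.succAbove) 1)

lemma Dmap_single (n : ℕ) (τ : Fin (n+1) → ι) (a : ℚ) :
    Dmap ι n (Finsupp.single τ a) =
      a • ∑ i : Fin (n + 1), ((-1 : ℚ) ^ (i : ℕ)) • Finsupp.single (τ ∘ i.succAbove) 1 := by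
  simp [Dmap, LinearMap.toSpanSingleton_apply]

noncomputable def coneMap (ι : Type*) (v : ι) (n : ℕ) : Amb ι n →ₗ[ℚ] Amb ι (n+1) :=
  Finsupp.lmapDomain ℚ ℚ (fun τ => Fin.cons v τ)

lemma coneMap_single (v : ι) (n : ℕ) (τ : Fin n → ι) (a : ℚ) :
    coneMap ι v n (Finsupp.single τ a) = Finsupp.single (Fin.cons v τ) a := by
  simp [coneMap, Finsupp.mapDomain_single]

lemma cone_identity (v : ι) (m : ℕ) (c : Amb ι (m+1)) :
    Dmap ι (m+1) (coneMap ι v (m+1) c) = c - coneMap ι v m (Dmap ι m c) := by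
  induction c using Finsupp.induction with
  | zero => simp
  | single_add τ a f hτ ha ih =>
    rw [map_add, map_add, map_add, map_add, ih]
    rw [coneMap_single, Dmap_single, Dmap_single, Fin.sum_univ_succ]
    have h0 : (Fin.cons v τ : Fin (m+2) → ι) ∘ (0 : Fin (m+2)).succAbove = τ := by
      funext j; simp [Fin.zero_succAbove]
    have hsucc : ∀ i : Fin (m+1),
        (Fin.cons v τ : Fin (m+2) → ι) ∘ (Fin.succ i).succAbove
          = Fin.cons v (τ ∘ i.succAbove) := by
      intro i; funext j
      cases j using Fin.cases with
      | zero => simp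
      | succ j' => simp [Fin.succ_succAbove_succ]
    rw [h0]
    have : ∀ i : Fin (m+1),
        ((-1 : ℚ) ^ ((Fin.succ i : Fin (m+2)) : ℕ))
            • Finsupp.single ((Fin.cons v τ : Fin (m+2) → ι) ∘ (Fin.succ i).succAbove) (1:ℚ)
          = -(((-1:ℚ) ^ (i : ℕ)) • Finsupp.single (Fin.cons v (τ ∘ i.succAbove)) (1:ℚ)) := by
      intro i
      rw [hsucc i]
      have : ((-1 : ℚ) ^ ((Fin.succ i : Fin (m+2)) : ℕ)) = -((-1:ℚ)^(i:ℕ)) := by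
        simp [Fin.val_succ, pow_succ]
      rw [this, neg_smul]
    rw [Finset.sum_congr rfl (fun i _ => this i)]
    rw [Finset.sum_neg_distrib]
    rw [smul_add, smul_neg]
    rw [map_smul, map_sum]
    simp only [map_smul, coneMap_single]
    simp [pow_zero, one_smul, sub_eq_add_neg, Finset.smul_sum]
    abel
lemma DD (n : ℕ) (c : Amb ι (n+2)) : Dmap ι n (Dmap ι (n+1) c) = 0 := by
  induction n with
  | zero =>
    induction c using Finsupp.induction with
    | zero => simp
    | single_add τ a f hτ ha ih =>
      rw [map_add, map_add, ih, add_zero]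
      rw [Dmap_single, map_smul, map_sum]
      rw [Fin.sum_univ_two]
      simp only [map_smul, Dmap_single]
      have e1 : ∀ (ρ : Fin 1 → ι),
          ∑ i : Fin 1, ((-1:ℚ)^(i:ℕ)) • Finsupp.single (ρ ∘ i.succAbove) (1:ℚ)
            = Finsupp.single (Fin.elim0 : Fin 0 → ι) 1 := by
        intro ρ
        rw [Fin.sum_univ_one]
        have : (ρ ∘ (0 : Fin 1).succAbove) = (Fin.elim0 : Fin 0 → ι) := by
          funext j; exact j.elim0
        simp [this]
      rw [e1, e1]
      simp
  | succ m ih =>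
    induction c using Finsupp.induction with
    | zero => simp
    | single_add τ a f hτ ha ihf =>
      rw [map_add, map_add, ihf, add_zero]
      have hτc : Finsupp.single τ a
          = coneMap ι (τ 0) (m+2) (Finsupp.single (Fin.tail τ) a) := by
        rw [coneMap_single, Fin.cons_self_tail]
      rw [hτc, cone_identity, map_sub, cone_identity, ih]
      simp

/-- All tuples in the support span faces of `X`. -/
def SuppIn (X : Set (Finset ι)) {n : ℕ} (c : Amb ι n) : Prop :=
  ∀ τ ∈ c.support, Finset.image τ Finset.univ ∈ X

lemma suppIn_zero (X : Set (Finset ι)) (n : ℕ) : SuppIn X (0 : Amb ι n) := by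
  intro τ h; simp at h

lemma suppIn_add {X : Set (Finset ι)} {n : ℕ} {c d : Amb ι n}
    (hc : SuppIn X c) (hd : SuppIn X d) : SuppIn X (c + d) := by
  intro τ h
  rcases Finset.mem_union.1 (Finsupp.support_add h) with h' | h'
  · exact hc τ h'
  · exact hd τ h'

lemma suppIn_sub {X : Set (Finset ι)} {n : ℕ} {c d : Amb ι n}
    (hc : SuppIn X c) (hd : SuppIn X d) : SuppIn X (c - d) := by
  intro τ h
  have := Finsupp.support_sub (f := c) (g := d) h
  rcases Finset.mem_union.1 this with h' | h'
  · exact hc τ h'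
  · exact hd τ (by simpa using h')

lemma image_comp_succAbove_subset {n : ℕ} (τ : Fin (n+1) → ι) (i : Fin (n+1)) :
    Finset.image (τ ∘ i.succAbove) Finset.univ ⊆ Finset.image τ Finset.univ := by
  intro x hx
  simp only [Finset.mem_image] at hx ⊢
  obtain ⟨j, _, rfl⟩ := hx
  exact ⟨i.succAbove j, Finset.mem_univ _, rfl⟩

/-- support of boundary consists of faces. -/
lemma supp_Dmap {n : ℕ} (c : Amb ι (n+1)) :
    ∀ τ ∈ (Dmap ι n c).support, ∃ ρ ∈ c.support, ∃ i : Fin (n+1), τ = ρ ∘ i.succAbove := by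
  induction c using Finsupp.induction with
  | zero => simp
  | single_add ρ a f hρ ha ih =>
    intro τ hτ
    rw [map_add] at hτ
    rcases Finset.mem_union.1 (Finsupp.support_add hτ) with h' | h'
    · rw [Dmap_single] at h'
      have h2 := Finsupp.support_smul h'
      have h3 := Finsupp.support_finset_sum h2
      simp only [Finset.mem_biUnion, Finset.mem_univ, true_and] at h3
      obtain ⟨i, hi⟩ := h3
      have h4 := Finsupp.support_smul hi
      have h5 := Finsupp.support_single_subset h4
      simp only [Finset.mem_singleton] at h5
      refine ⟨ρ, ?_, i, h5⟩
      have : f ρ = 0 := Finsupp.notMem_support_iff.1 hρ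
      simp [Finsupp.mem_support_iff, this, ha]
    · obtain ⟨ρ', hρ', i, hi⟩ := ih τ h'
      refine ⟨ρ', ?_, i, hi⟩
      have hne : ρ' ≠ ρ := fun h => hρ (h ▸ hρ')
      have : (Finsupp.single ρ a) ρ' = 0 := Finsupp.single_eq_of_ne hne
      simp [Finsupp.mem_support_iff, this, Finsupp.mem_support_iff.1 hρ']

lemma suppIn_Dmap {X : Set (Finset ι)} (hX : IsComplex X) {n : ℕ} {c : Amb ι (n+1)}
    (hc : SuppIn X c) : SuppIn X (Dmap ι n c) := by
  intro τ hτ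
  obtain ⟨ρ, hρ, i, rfl⟩ := supp_Dmap c τ hτ
  exact hX _ (hc ρ hρ) _ (image_comp_succAbove_subset ρ i)

lemma image_cons (v : ι) {n : ℕ} (τ : Fin n → ι) :
    Finset.image (Fin.cons v τ : Fin (n+1) → ι) Finset.univ
      = insert v (Finset.image τ Finset.univ) := by
  ext x
  simp only [Finset.mem_image, Finset.mem_insert, Finset.mem_univ, true_and]
  constructor
  · rintro ⟨j, rfl⟩
    cases j using Fin.cases with
    | zero => left; simp
    | succ j' => right; exact ⟨j', by simp⟩
  · rintro (rfl | ⟨j, rfl⟩)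
    · exact ⟨0, by simp⟩
    · exact ⟨j.succ, by simp⟩

lemma supp_coneMap {n : ℕ} (v : ι) (c : Amb ι n) :
    ∀ τ ∈ (coneMap ι v n c).support, ∃ ρ ∈ c.support, τ = Fin.cons v ρ := by
  intro τ hτ
  have := Finsupp.mapDomain_support (f := fun ρ : Fin n → ι => (Fin.cons v ρ : Fin (n+1) → ι)) hτ
  simp only [Finset.mem_image] at this
  obtain ⟨ρ, hρ, rfl⟩ := this
  exact ⟨ρ, hρ, rfl⟩

/-- Embedding of `Chains X n` into ambient chains. -/
noncomputable def emb {V : Type*} [DecidableEq V] (X : Set (Finset V)) (n : ℕ) :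
    Chains X n →ₗ[ℚ] Amb V n :=
  Finsupp.lmapDomain ℚ ℚ Subtype.val

lemma emb_single {X : Set (Finset ι)} {n : ℕ} (σ : Tup X n) (a : ℚ) :
    emb X n (Finsupp.single σ a) = Finsupp.single σ.1 a := by
  show Finsupp.mapDomain Subtype.val (Finsupp.single σ a) = _
  exact Finsupp.mapDomain_single

lemma emb_inj {X : Set (Finset ι)} {n : ℕ} : Function.Injective (emb X n) :=
  Finsupp.mapDomain_injective Subtype.val_injective

lemma suppIn_emb {X : Set (Finset ι)} {n : ℕ} (c : Chains X n) : SuppIn X (emb X n c) := by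
  intro τ hτ
  have := Finsupp.mapDomain_support (f := (Subtype.val : Tup X n → (Fin n → ι))) hτ
  simp only [Finset.mem_image] at this
  obtain ⟨σ, _, rfl⟩ := this
  exact σ.2

lemma emb_surj {X : Set (Finset ι)} {n : ℕ} (c : Amb ι n) (hc : SuppIn X c) :
    ∃ c' : Chains X n, emb X n c' = c := by
  refine ⟨Finsupp.comapDomain Subtype.val c Subtype.val_injective.injOn, ?_⟩
  exact Finsupp.mapDomain_comapDomain _ Subtype.val_injective c
    (by intro τ hτ; exact ⟨⟨τ, hc τ hτ⟩, rfl⟩)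

lemma emb_comm {X : Set (Finset ι)} (hX : IsComplex X) (n : ℕ) :
    (emb X n) ∘ₗ (bdry X n) = (Dmap ι n) ∘ₗ (emb X (n+1)) := by
  apply Finsupp.lhom_ext
  intro σ a
  simp only [LinearMap.comp_apply, emb_single]
  rw [Dmap_single]
  have : bdry X n (Finsupp.single σ a)
      = a • ∑ i : Fin (n + 1), ((-1 : ℚ) ^ (i : ℕ)) • gen X (σ.1 ∘ i.succAbove) := by
    simp [bdry, LinearMap.toSpanSingleton_apply]
  rw [this, map_smul, map_sum]
  congr 1
  refine Finset.sum_congr rfl fun i _ => ?_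
  rw [map_smul]
  congr 1
  have hface : Finset.image (σ.1 ∘ i.succAbove) Finset.univ ∈ X :=
    hX _ σ.2 _ (image_comp_succAbove_subset σ.1 i)
  rw [gen, dif_pos hface]
  exact emb_single (X := X) ⟨σ.1 ∘ i.succAbove, hface⟩ 1

lemma vanishes_iff {X : Set (Finset ι)} (i : ℕ) :
    HomologyVanishes X i ↔
      ∀ c : Chains X (i+1), bdry X i c = 0 → ∃ b, bdry X (i+1) b = c := by
  constructor
  · intro h c hc
    have hm := h (Submodule.Quotient.mk ⟨c, hc⟩)
    rw [Submodule.Quotient.mk_eq_zero] at hm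
    simpa [Submodule.mem_comap, LinearMap.mem_range] using hm
  · intro h x
    obtain ⟨⟨c, hc⟩, rfl⟩ := Submodule.Quotient.mk_surjective _ x
    rw [Submodule.Quotient.mk_eq_zero]
    simpa [Submodule.mem_comap, LinearMap.mem_range] using h c hc

/-- transfer: ambient exactness implies vanishing. -/
lemma vanishes_of_ambient {X : Set (Finset ι)} (hX : IsComplex X) (i : ℕ)
    (H : ∀ z : Amb ι (i+1), SuppIn X z → Dmap ι i z = 0 →
      ∃ b : Amb ι (i+2), SuppIn X b ∧ Dmap ι (i+1) b = z) :
    HomologyVanishes X i := by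
  rw [vanishes_iff]
  intro c hc
  have hz : Dmap ι i (emb X (i+1) c) = 0 := by
    have := congrArg (fun f => f c) (emb_comm hX i).symm
    simpa [hc] using this
  obtain ⟨b, hb, hdb⟩ := H (emb X (i+1) c) (suppIn_emb c) hz
  obtain ⟨b', rfl⟩ := emb_surj b hb
  refine ⟨b', emb_inj ?_⟩
  have := congrArg (fun f => f b') (emb_comm hX (i+1))
  simpa [hdb] using this

/-- transfer: vanishing implies ambient exactness. -/
lemma ambient_of_vanishes {X : Set (Finset ι)} (hX : IsComplex X) (i : ℕ)
    (H : HomologyVanishes X i) :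
    ∀ z : Amb ι (i+1), SuppIn X z → Dmap ι i z = 0 →
      ∃ b : Amb ι (i+2), SuppIn X b ∧ Dmap ι (i+1) b = z := by
  rw [vanishes_iff] at H
  intro z hz hdz
  obtain ⟨z', rfl⟩ := emb_surj z hz
  have hz' : bdry X i z' = 0 := by
    apply emb_inj
    have := congrArg (fun f => f z') (emb_comm hX i)
    simp only [LinearMap.comp_apply] at this
    rw [this, hdz, map_zero]
  obtain ⟨b', hb'⟩ := H z' hz'
  refine ⟨emb X (i+2) b', suppIn_emb b', ?_⟩
  have := congrArg (fun f => f b') (emb_comm hX (i+1))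
  simp only [LinearMap.comp_apply] at this
  rw [← this, hb']

lemma isComplex_diff_max {X : Set (Finset ι)} (hX : IsComplex X) {s : Finset ι}
    (hs : s ∈ X) (hmax : ∀ t ∈ X, s ⊆ t → s = t) : IsComplex (X \ {s}) := by
  intro u hu t ht
  refine ⟨hX _ hu.1 _ ht, ?_⟩
  intro hts
  simp only [Set.mem_singleton_iff] at hts
  subst hts
  exact hu.2 (by simp [hmax _ hu.1 ht])

open Classical in
lemma acyclic [Fintype ι] (k : ℕ) : ∀ (X : Set (Finset ι)), IsComplex X → X.ncard ≤ k →
    ∀ n, k ≤ n → ∀ z : Amb ι (n+1), SuppIn X z → Dmap ι n z = 0 →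
      ∃ b : Amb ι (n+2), SuppIn X b ∧ Dmap ι (n+1) b = z := by
  induction k with
  | zero =>
    intro X hX hcard n hn z hz hdz
    have hX0 : X = ∅ := by
      rw [← Set.ncard_eq_zero (Set.toFinite X)]; omega
    have : z = 0 := by
      ext τ
      by_contra h
      have : τ ∈ z.support := Finsupp.mem_support_iff.2 (by simpa using h)
      have := hz τ this
      simp [hX0] at this
    exact ⟨0, suppIn_zero X _, by simp [this]⟩
  | succ k ih =>
    intro X hX hcard n hn z hz hdz
    by_cases hle : X.ncard ≤ k
    · exact ih X hX hle n (by omega) z hz hdz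
    -- X nonempty; pick maximal face s
    have hXne : X.Nonempty := by
      rw [Set.nonempty_iff_ne_empty]
      intro h; rw [h] at hle; simp at hle
    obtain ⟨s, hs, hsmax'⟩ := Set.Finite.exists_maximalFor id X (Set.toFinite X) hXne
    have hsmax : ∀ t ∈ X, s ⊆ t → s = t :=
      fun t ht hst => Finset.Subset.antisymm hst (hsmax' ht hst)
    by_cases hse : s = ∅
    · -- X = {∅}, so z = 0
      have hXsing : X = {∅} := by
        apply Set.eq_singleton_iff_unique_mem.2
        refine ⟨hse ▸ hs, fun t ht => ?_⟩
        have := hsmax t ht (hse ▸ Finset.empty_subset t)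
        rw [← this, hse]
      have hz0 : z = 0 := by
        ext τ
        by_contra h
        have hm : τ ∈ z.support := Finsupp.mem_support_iff.2 (by simpa using h)
        have := hz τ hm
        rw [hXsing] at this
        simp only [Set.mem_singleton_iff] at this
        have : (τ 0) ∈ Finset.image τ Finset.univ := by simp
        rw [‹Finset.image τ Finset.univ = ∅›] at this
        simp at this
      exact ⟨0, suppIn_zero X _, by simp [hz0]⟩
    obtain ⟨v, hv⟩ := Finset.nonempty_iff_ne_empty.2 hse
    -- n = m + 1
    obtain ⟨m, rfl⟩ : ∃ m, n = m + 1 := ⟨n - 1, by omega⟩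
    -- decompose z
    set z₂ := z.filter (fun τ => Finset.image τ Finset.univ = s) with hz₂
    set z₁ := z.filter (fun τ => ¬ Finset.image τ Finset.univ = s) with hz₁
    have hzsum : z₂ + z₁ = z := Finsupp.filter_pos_add_filter_neg z _
    have hsupp₂ : ∀ τ ∈ z₂.support, Finset.image τ Finset.univ = s := by
      intro τ h; rw [hz₂, Finsupp.support_filter, Finset.mem_filter] at h; exact h.2
    have hsupp₁ : ∀ τ ∈ z₁.support,
        Finset.image τ Finset.univ ∈ X ∧ Finset.image τ Finset.univ ≠ s := by
      intro τ h; rw [hz₁, Finsupp.support_filter, Finset.mem_filter] at h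
      exact ⟨hz τ (h.1), h.2⟩
    set X' := X \ {s} with hX'
    have hX'c : IsComplex X' := isComplex_diff_max hX hs hsmax
    have hX'card : X'.ncard ≤ k := by
      have := Set.ncard_diff_singleton_of_mem hs
      have hXk : X.ncard ≤ k + 1 := hcard
      rw [hX', this]
      omega
    set B : Set (Finset ι) := {t | t ⊆ s ∧ t ≠ s} with hB
    have hBc : IsComplex B := by
      intro u hu t ht
      refine ⟨ht.trans hu.1, fun h => ?_⟩
      subst h
      exact hu.2 (Finset.Subset.antisymm hu.1 ht)
    have hBX' : B ⊆ X' := by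
      intro t ht
      exact ⟨hX _ hs _ ht.1, by simpa using ht.2⟩
    have hBcard : B.ncard ≤ k := by
      have h1 : insert s B ⊆ X := by
        intro t ht
        rcases Set.mem_insert_iff.1 ht with rfl | ht
        · exact hs
        · exact (hBX' ht).1
      have h2 : (insert s B).ncard ≤ X.ncard := Set.ncard_le_ncard h1 (Set.toFinite X)
      rw [Set.ncard_insert_of_notMem (by simp [hB]) (Set.toFinite B)] at h2
      omega
    -- w
    set w := Dmap ι (m+1) z₂ with hw
    have hwz₁ : Dmap ι (m+1) z₁ = -w := by
      have : Dmap ι (m+1) (z₂ + z₁) = 0 := by rw [hzsum]; exact hdz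
      rw [map_add] at this
      linear_combination (norm := abel) this
    have hwB : SuppIn B w := by
      intro τ hτ
      constructor
      · obtain ⟨ρ, hρ, i, rfl⟩ := supp_Dmap z₂ τ hτ
        exact (hsupp₂ ρ hρ) ▸ image_comp_succAbove_subset ρ i
      · intro hτs
        have hτ' : τ ∈ (Dmap ι (m+1) z₁).support := by rw [hwz₁]; simpa using hτ
        obtain ⟨ρ, hρ, i, rfl⟩ := supp_Dmap z₁ τ hτ'
        have himg := image_comp_succAbove_subset ρ i
        rw [hτs] at himg
        exact (hsupp₁ ρ hρ).2 (hsmax _ (hsupp₁ ρ hρ).1 himg).symm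
    have hwcyc : Dmap ι m w = 0 := DD (ι := ι) m z₂
    obtain ⟨u, huB, hdu⟩ := ih B hBc hBcard m (by omega) w hwB hwcyc
    -- cone part
    set c'' := z₂ - u with hc''
    have hc''s : ∀ τ ∈ c''.support, Finset.image τ Finset.univ ⊆ s := by
      intro τ hτ
      rcases Finset.mem_union.1 (Finsupp.support_sub (f := z₂) (g := u) hτ) with h' | h'
      · exact (hsupp₂ τ h').le
      · exact (huB τ h').1
    have hc''cyc : Dmap ι (m+1) c'' = 0 := by
      rw [hc'', map_sub, hdu, ← hw, sub_self]
    set b₂ := coneMap ι v (m+2) c'' with hb₂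
    have hb₂X : SuppIn X b₂ := by
      intro τ hτ
      obtain ⟨ρ, hρ, rfl⟩ := supp_coneMap v c'' τ hτ
      rw [image_cons]
      apply hX _ hs
      exact Finset.insert_subset hv (hc''s ρ hρ)
    have hdb₂ : Dmap ι (m+2) b₂ = c'' := by
      rw [hb₂, cone_identity, hc''cyc, map_zero, sub_zero]
    -- rest
    have hrest : SuppIn X' (z₁ + u) := by
      apply suppIn_add
      · intro τ hτ; exact ⟨(hsupp₁ τ hτ).1, by simpa using (hsupp₁ τ hτ).2⟩
      · intro τ hτ; exact hBX' (huB τ hτ)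
    have hrestcyc : Dmap ι (m+1) (z₁ + u) = 0 := by
      rw [map_add, hwz₁, hdu, neg_add_cancel]
    obtain ⟨b₁, hb₁X, hdb₁⟩ := ih X' hX'c hX'card (m+1) (by omega) (z₁ + u) hrest hrestcyc
    refine ⟨b₁ + b₂, suppIn_add (fun τ h => (hb₁X τ h).1) hb₂X, ?_⟩
    rw [map_add, hdb₁, hdb₂]
    rw [← hzsum, hc'']
    abel

section Det
variable {m : ℕ} (σ : Fin (m+2) → ι)

/-- indicator matrix of a tuple against the reference enumeration `σ`. -/
def matM (τ : Fin (m+2) → ι) : Matrix (Fin (m+2)) (Fin (m+2)) ℚ :=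
  Matrix.of fun k j => if τ k = σ j then 1 else 0

noncomputable def psiM : Amb ι (m+2) →ₗ[ℚ] ℚ :=
  Finsupp.lsum ℚ fun τ => LinearMap.toSpanSingleton ℚ ℚ (Matrix.det (matM σ τ))

lemma psiM_single (τ : Fin (m+2) → ι) (a : ℚ) :
    psiM σ (Finsupp.single τ a) = a * Matrix.det (matM σ τ) := by
  simp [psiM, LinearMap.toSpanSingleton_apply, smul_eq_mul]

lemma det_matM_self (hσ : Function.Injective σ) : Matrix.det (matM σ σ) = 1 := by
  have : matM σ σ = (1 : Matrix (Fin (m+2)) (Fin (m+2)) ℚ) := by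
    ext k j
    simp only [matM, Matrix.of_apply, Matrix.one_apply]
    by_cases h : k = j
    · simp [h]
    · simp only [if_neg h, if_neg (fun hh => h (hσ hh))]
  rw [this, Matrix.det_one]

lemma det_matM_zero {τ : Fin (m+2) → ι} (j : Fin (m+2)) (h : ∀ k, τ k ≠ σ j) :
    Matrix.det (matM σ τ) = 0 := by
  apply Matrix.det_eq_zero_of_column_eq_zero j
  intro k
  simp [matM, h k]

lemma sum_det_faces (hσinj : Function.Injective σ) {M : Finset ι}
    (hσsur : ∀ x ∈ M, ∃ j, σ j = x)
    (ρ : Fin (m+3) → ι) (hρ : ∀ k, ρ k ∈ M) :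
    ∑ i : Fin (m+3), ((-1:ℚ) ^ (i:ℕ)) * Matrix.det (matM σ (ρ ∘ i.succAbove)) = 0 := by
  set N : Matrix (Fin (m+3)) (Fin (m+3)) ℚ :=
    Matrix.of fun k j => Fin.cases (1:ℚ) (fun j' => if ρ k = σ j' then 1 else 0) j with hN
  have hdet0 : N.det = 0 := by
    rw [← Matrix.exists_mulVec_eq_zero_iff]
    refine ⟨Fin.cases (1:ℚ) (fun _ => -1), ?_, ?_⟩
    · intro h
      have := congrFun h 0
      simp at this
    · funext k
      simp only [Matrix.mulVec, dotProduct]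
      rw [Fin.sum_univ_succ]
      have h1 : ∀ j' : Fin (m+2),
          N k j'.succ * (Fin.cases (1:ℚ) (fun _ => -1) j'.succ)
            = -(if ρ k = σ j' then (1:ℚ) else 0) := by
        intro j'; simp [hN]
      rw [Finset.sum_congr rfl (fun j' _ => h1 j')]
      obtain ⟨j₀, hj₀⟩ := hσsur (ρ k) (hρ k)
      have h2 : ∀ j' : Fin (m+2), (if ρ k = σ j' then (1:ℚ) else 0)
          = if j₀ = j' then (1:ℚ) else 0 := by
        intro j'
        by_cases h : j₀ = j'
        · simp [← h, hj₀]
        · have : ρ k ≠ σ j' := by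
            rw [← hj₀]; exact fun hh => h (hσinj hh)
          simp [h, this]
      simp only [h2]
      rw [Finset.sum_neg_distrib, Finset.sum_ite_eq (Finset.univ) j₀ (fun _ => (1:ℚ))]
      simp [hN]
  have hexp := Matrix.det_succ_column_zero N
  rw [hdet0] at hexp
  have : ∀ i : Fin (m+3), (N.submatrix i.succAbove Fin.succ) = matM σ (ρ ∘ i.succAbove) := by
    intro i
    ext k j
    simp [hN, Matrix.submatrix_apply, matM]
  symm
  rw [hexp]
  refine Finset.sum_congr rfl fun i _ => ?_
  rw [this i]
  simp [hN]

lemma psiM_Dmap_zero (hσinj : Function.Injective σ) {M : Finset ι}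
    (hσsur : ∀ x ∈ M, ∃ j, σ j = x)
    (u : Amb ι (m+3)) (hu : ∀ ρ ∈ u.support, ∀ k, ρ k ∈ M) :
    psiM σ (Dmap ι (m+2) u) = 0 := by
  induction u using Finsupp.induction with
  | zero => simp
  | single_add ρ a f hρ ha ih =>
    have hmemf : ∀ ρ' ∈ f.support, ∀ k, ρ' k ∈ M := by
      intro ρ' h k
      apply hu ρ' _ k
      have hne : ρ' ≠ ρ := fun hh => hρ (hh ▸ h)
      simp [Finsupp.mem_support_iff, Finsupp.single_eq_of_ne hne,
        Finsupp.mem_support_iff.1 h]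
    have hmemρ : ∀ k, ρ k ∈ M := by
      apply hu ρ
      simp [Finsupp.mem_support_iff, Finsupp.notMem_support_iff.1 hρ, ha]
    rw [map_add, map_add, ih hmemf, add_zero]
    rw [Dmap_single, map_smul]
    rw [map_sum]
    have : ∀ i : Fin (m+3), psiM σ (((-1:ℚ)^(i:ℕ)) • Finsupp.single (ρ ∘ i.succAbove) (1:ℚ))
        = ((-1:ℚ)^(i:ℕ)) * Matrix.det (matM σ (ρ ∘ i.succAbove)) := by
      intro i
      rw [map_smul, psiM_single]
      simp [smul_eq_mul]
    rw [Finset.sum_congr rfl (fun i _ => this i)]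
    rw [sum_det_faces σ hσinj hσsur ρ hmemρ]
    simp

end Det

lemma psiM_eq_zero {m : ℕ} (σ : Fin (m+2) → ι) (b : Amb ι (m+2))
    (h : ∀ τ ∈ b.support, Matrix.det (matM σ τ) = 0) : psiM σ b = 0 := by
  induction b using Finsupp.induction with
  | zero => simp
  | single_add τ a f hτ ha ih =>
    have h1 : Matrix.det (matM σ τ) = 0 := by
      apply h τ
      simp [Finsupp.mem_support_iff, Finsupp.notMem_support_iff.1 hτ, ha]
    have h2 : ∀ τ' ∈ f.support, Matrix.det (matM σ τ') = 0 := by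
      intro τ' hτ'
      apply h τ'
      have hne : τ' ≠ τ := fun hh => hτ (hh ▸ hτ')
      simp [Finsupp.mem_support_iff, Finsupp.single_eq_of_ne hne,
        Finsupp.mem_support_iff.1 hτ']
    rw [map_add, ih h2, add_zero, psiM_single, h1, mul_zero]

end Ambient

lemma isComplex_nerve {ι α : Type*} (F : ι → Set α) : IsComplex (nerveCplx F) := by
  intro s hs t hts
  obtain ⟨x, hx⟩ := hs
  refine ⟨x, ?_⟩
  simp only [Set.mem_iInter] at hx ⊢
  exact fun i hi => hx i (hts hi)

lemma isComplex_induced {ι : Type*} {X : Set (Finset ι)} (hX : IsComplex X) (S : Finset ι) :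
    IsComplex (induced X S) :=
  fun s hs t ht => ⟨hX _ hs.1 _ ht, ht.trans hs.2⟩

lemma leray_mem {ι : Type*} [Fintype ι] [DecidableEq ι] {X : Set (Finset ι)}
    (hX : IsComplex X) :
    (2 ^ (Fintype.card ι)) ∈
      {d | ∀ S : Finset ι, ∀ i, d ≤ i → HomologyVanishes (induced X S) i} := by
  intro S i hi
  apply vanishes_of_ambient (isComplex_induced hX S)
  intro z hz hdz
  refine acyclic (2 ^ (Fintype.card ι)) _ (isComplex_induced hX S) ?_ i hi z hz hdz
  calc (induced X S).ncard ≤ (Set.univ : Set (Finset ι)).ncard :=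
        Set.ncard_le_ncard (Set.subset_univ _) (Set.toFinite _)
    _ = 2 ^ (Fintype.card ι) := by
        rw [Set.ncard_univ, Nat.card_eq_fintype_card, Fintype.card_finset]

theorem stmt1_aux {ι : Type*} {α : Type*} [Fintype ι] [DecidableEq ι] (F : ι → Set α) :
    hellyNumberIdx F ≤ 1 + lerayNumber (nerveCplx F) := by
  classical
  set L := lerayNumber (nerveCplx F) with hLdef
  apply Nat.sInf_le
  refine ⟨by omega, ?_⟩
  intro K hK
  by_contra hne
  -- minimal subfamily with empty intersection
  set S : Set (Finset ι) := {T | T ⊆ K ∧ ¬ (⋂ i ∈ T, F i).Nonempty} with hSdef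
  have hKS : K ∈ S := ⟨subset_rfl, hne⟩
  obtain ⟨M, hMS, hMmin'⟩ :=
    Set.Finite.exists_minimalFor Finset.card S (Set.toFinite S) ⟨K, hKS⟩
  have hMmin : ∀ t ∈ S, t.card ≤ M.card → M.card = t.card :=
    fun t ht h => le_antisymm (hMmin' ht h) h
  have hproper : ∀ t, t ⊆ M → t ≠ M → t ∈ nerveCplx F := by
    intro t htM htne
    by_contra h
    have htS : t ∈ S := ⟨htM.trans hMS.1, h⟩
    have := hMmin t htS (Finset.card_le_card htM)
    exact htne (Finset.eq_of_subset_of_card_le htM this.le)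
  have hMcard : L + 2 ≤ M.card := by
    by_contra h
    push_neg at h
    exact hMS.2 (hK M hMS.1 (by omega))
  set Y := induced (nerveCplx F) M with hYdef
  have hYmem : ∀ t, t ∈ Y ↔ t ⊆ M ∧ t ≠ M := by
    intro t
    constructor
    · rintro ⟨htn, htM⟩
      refine ⟨htM, ?_⟩
      rintro rfl
      exact hMS.2 htn
    · rintro ⟨htM, htne⟩
      exact ⟨hproper t htM htne, htM⟩
  have hYc : IsComplex Y := isComplex_induced (isComplex_nerve F) M
  obtain ⟨m, hm⟩ : ∃ m, M.card = m + 2 := ⟨M.card - 2, by omega⟩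
  have hvan : HomologyVanishes Y m := by
    have hnonempty : {d | ∀ S : Finset ι, ∀ i, d ≤ i →
        HomologyVanishes (induced (nerveCplx F) S) i}.Nonempty :=
      ⟨_, leray_mem (isComplex_nerve F)⟩
    have hmem := Nat.sInf_mem hnonempty
    have hLeq : sInf {d | ∀ S : Finset ι, ∀ i, d ≤ i →
        HomologyVanishes (induced (nerveCplx F) S) i} = L := rfl
    exact hmem M m (by omega)
  -- enumeration of M
  set e := M.equivFin with hedef
  set σ : Fin (m+2) → ι := fun i => (e.symm (Fin.cast hm.symm i) : ι) with hσdef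
  have hσinj : Function.Injective σ := by
    intro a b hab
    have h1 : e.symm (Fin.cast hm.symm a) = e.symm (Fin.cast hm.symm b) := Subtype.ext hab
    have h2 := e.symm.injective h1
    simpa [Fin.ext_iff] using congrArg Fin.val h2
  have hσmem : ∀ i, σ i ∈ M := fun i => (e.symm _).2
  have hσsur : ∀ x ∈ M, ∃ j, σ j = x := by
    intro x hx
    refine ⟨Fin.cast hm (e ⟨x, hx⟩), ?_⟩
    simp [hσdef]
  -- the nonbounding cycle
  set z := Dmap ι (m+1) (Finsupp.single σ 1) with hzdef
  have hzcyc : Dmap ι m z = 0 := DD m (Finsupp.single σ 1)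
  have hzY : SuppIn Y z := by
    intro τ hτ
    obtain ⟨ρ, hρ, i, rfl⟩ := supp_Dmap (Finsupp.single σ 1) τ hτ
    have hρσ : ρ = σ := by
      have := Finsupp.support_single_subset hρ
      simpa using this
    rw [hYmem]
    constructor
    · intro x hx
      simp only [Finset.mem_image] at hx
      obtain ⟨j, _, rfl⟩ := hx
      rw [hρσ]
      simp only [Function.comp_apply]
      exact hσmem _
    · intro hcontra
      have hinj : Function.Injective (ρ ∘ Fin.succAbove i) := by
        rw [hρσ]
        exact hσinj.comp (Fin.succAbove_right_injective)
      have hcard := Finset.card_image_of_injective (Finset.univ : Finset (Fin (m+1))) hinj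
      rw [hcontra, hm] at hcard
      simp at hcard
  obtain ⟨b, hbY, hdb⟩ := ambient_of_vanishes hYc m hvan z hzY hzcyc
  set c : Amb ι (m+2) := Finsupp.single σ 1 - b with hcdef
  have hdc : Dmap ι (m+1) c = 0 := by
    rw [hcdef, map_sub, hdb, ← hzdef, sub_self]
  have hbM : ∀ τ ∈ b.support, Finset.image τ Finset.univ ⊆ M ∧
      Finset.image τ Finset.univ ≠ M := by
    intro τ hτ
    exact (hYmem _).1 (hbY τ hτ)
  have hcM : ∀ τ ∈ c.support, ∀ k, τ k ∈ M := by
    intro τ hτ k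
    rcases Finset.mem_union.1
        (Finsupp.support_sub (f := Finsupp.single σ 1) (g := b) hτ) with h' | h'
    · have : τ = σ := by simpa using Finsupp.support_single_subset h'
      subst this
      exact hσmem k
    · exact (hbM τ h').1 (Finset.mem_image_of_mem τ (Finset.mem_univ k))
  set v := σ 0 with hvdef
  set W := coneMap ι v (m+2) c with hWdef
  have hdW : Dmap ι (m+2) W = c := by
    rw [hWdef, cone_identity, hdc, map_zero, sub_zero]
  have hWM : ∀ ρ ∈ W.support, ∀ k, ρ k ∈ M := by
    intro ρ hρ k
    obtain ⟨τ', hτ', rfl⟩ := supp_coneMap v c ρ hρ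
    cases k using Fin.cases with
    | zero => simpa using hσmem 0
    | succ k' => simpa using hcM τ' hτ' k'
  have hψW : psiM σ (Dmap ι (m+2) W) = 0 := psiM_Dmap_zero σ hσinj hσsur W hWM
  rw [hdW] at hψW
  have hψσ : psiM σ (Finsupp.single σ (1:ℚ)) = 1 := by
    rw [psiM_single, det_matM_self σ hσinj, mul_one]
  have hψb : psiM σ b = 0 := by
    apply psiM_eq_zero
    intro τ hτ
    obtain ⟨hsub, hneq⟩ := hbM τ hτ
    obtain ⟨x, hxM, hxnot⟩ : ∃ x ∈ M, x ∉ Finset.image τ Finset.univ := by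
      by_contra hcon
      push_neg at hcon
      exact hneq (Finset.Subset.antisymm hsub hcon)
    obtain ⟨j, rfl⟩ := hσsur x hxM
    apply det_matM_zero σ j
    intro k hk
    exact hxnot (hk ▸ Finset.mem_image_of_mem τ (Finset.mem_univ k))
  rw [hcdef, map_sub, hψσ, hψb, sub_zero] at hψW
  exact one_ne_zero hψW

/-- `h(F) ≤ 1 + L(N(F))`. -/
theorem stmt1 {ι : Type*} {α : Type*} [Fintype ι] [DecidableEq ι] (F : ι → Set α) :
    hellyNumberIdx F ≤ 1 + lerayNumber (nerveCplx F) := by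
  exact stmt1_aux F
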